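/- (Symmetry of the MSM distance.) Let c ≥ 0 and let x = (x_1,…,x_m) and y = (y_1,…,y_n) be time series. Then d(x,y) = d(y,x). -/
import Mathlib


/-- The MSM split/merge cost function `C(u, v, w)`: it is `c` if `u` lies
between `v` and `w`, and `c + min(|u-v|, |u-w|)` otherwise. -/
noncomputable def msmC (c u v w : ℝ) : ℝ :=
  if (v ≤ u ∧ u ≤ w) ∨ (w ≤ u ∧ u ≤ v) then c else c + min |u - v| |u - w|

/-- The MSM dynamic-programming table `D[i,j]` (1-based indices) for the time
series given by the values of `x`, `y : ℕ → ℝ` at indices `1, 2, …`;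
values at row/column `0` are junk.  The MSM distance between
`(x 1, …, x m)` and `(y 1, …, y n)` is `msmD c x y m n`. -/
noncomputable def msmD (c : ℝ) (x y : ℕ → ℝ) : ℕ → ℕ → ℝ
  | 0, _ => 0
  | _ + 1, 0 => 0
  | 1, 1 => |x 1 - y 1|
  | i + 2, 1 => msmD c x y (i + 1) 1 + msmC c (x (i + 2)) (x (i + 1)) (y 1)
  | 1, j + 2 => msmD c x y 1 (j + 1) + msmC c (y (j + 2)) (x 1) (y (j + 1))
  | i + 2, j + 2 =>
      min (msmD c x y (i + 1) (j + 1) + |x (i + 2) - y (j + 2)|)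
        (min (msmD c x y (i + 1) (j + 2) + msmC c (x (i + 2)) (x (i + 1)) (y (j + 2)))
          (msmD c x y (i + 2) (j + 1) + msmC c (y (j + 2)) (x (i + 2)) (y (j + 1))))
  termination_by i j => (i, j)

lemma msmC_symm (c u v w : ℝ) : msmC c u v w = msmC c u w v := by
  unfold msmC
  rw [min_comm]
  exact if_congr or_comm rfl rfl

theorem msm_key (c : ℝ) (x y : ℕ → ℝ) :
    ∀ i j : ℕ, msmD c x y (i + 1) (j + 1) = msmD c y x (j + 1) (i + 1)
  | 0, 0 => by rw [msmD, msmD, abs_sub_comm]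
  | i + 1, 0 => by
      show msmD c x y (i + 2) 1 = msmD c y x 1 (i + 2)
      rw [msmD, msmD, msm_key c x y i 0, msmC_symm]
  | 0, j + 1 => by
      show msmD c x y 1 (j + 2) = msmD c y x (j + 2) 1
      rw [msmD, msmD, msm_key c x y 0 j, msmC_symm]
  | i + 1, j + 1 => by
      show msmD c x y (i + 2) (j + 2) = msmD c y x (j + 2) (i + 2)
      rw [msmD, msmD, msm_key c x y i j, msm_key c x y i (j + 1),
        msm_key c x y (i + 1) j, abs_sub_comm,
        min_comm (msmD c y x (j + 2) (i + 1) + _),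
        msmC_symm c (x (i + 2)), msmC_symm c (y (j + 2))]
  termination_by i j => (i, j)

/-- Symmetry of the MSM distance: `d(x,y) = d(y,x)`. -/
theorem msm_symm (c : ℝ) (hc : 0 ≤ c) (x y : ℕ → ℝ) (m n : ℕ)
    (hm : 1 ≤ m) (hn : 1 ≤ n) :
    msmD c x y m n = msmD c y x n m := by
  obtain ⟨i, rfl⟩ := Nat.exists_eq_add_of_le hm
  obtain ⟨j, rfl⟩ := Nat.exists_eq_add_of_le hn
  simpa [Nat.add_comm] using msm_key c x y i j
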